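/- (Good pairs are preserved by duality) Let $\mathcal{P} = (\Pi(\Delta^1), \Pi(\Delta^2))$ be a good pair of generalized nef partitions, i.e., $\Pi(\Delta^1) = \{\Delta^1_1, \dots, \Delta^1_s\}$ and $\Pi(\Delta^2) = \{\Delta^2_1, \dots, \Delta^2_s\}$ are generalized nef partitions with each $\Delta^1_i$ a lattice polytope contained in $\Delta^2_i$, and $(\Delta^1, \Delta^2)$ a good pair of polytopes. Then $\mathcal{P}^* = (\Pi(\nabla^2), \Pi(\nabla^1))$ is a good pair of generalized nef partitions, where $\Pi(\nabla^k)$ denotes the dual generalized nef partition of $\Pi(\Delta^k)$. -/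

import Mathlib

open scoped RealInnerProductSpace Pointwise

namespace GNPPaper

variable {d s : ℕ}

abbrev E (d : ℕ) := EuclideanSpace ℝ (Fin d)

/-- Polar with the paper's sign convention `⟨x,y⟩ ≥ -1`. -/
def pol (A : Set (E d)) : Set (E d) := {y | ∀ x ∈ A, (-1 : ℝ) ≤ (inner ℝ x y : ℝ)}

/-- Vertices = extreme points. -/
def Vert (A : Set (E d)) : Set (E d) := Set.extremePoints ℝ A

/-- Indicator function of a set. -/
noncomputable def ind (I : Set (E d)) (v : E d) : ℝ := I.indicator (fun _ => 1) v

/-- The piece `Δ_i` associated to a part `I` of the vertices of the polar of `A`. -/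
def pieceD (A : Set (E d)) (I : Set (E d)) : Set (E d) :=
  {m | ∀ v ∈ Vert (pol A), -(ind I v) ≤ (inner ℝ m v : ℝ)}

def IsPolytope (A : Set (E d)) : Prop :=
  ∃ F : Finset (E d), A = convexHull ℝ (F : Set (E d))

def IsVertPartition (A : Set (E d)) (I : Fin s → Set (E d)) : Prop :=
  (∀ i, I i ⊆ Vert (pol A)) ∧ ∀ v ∈ Vert (pol A), ∃! i, v ∈ I i

/-- `I` induces a generalized nef partition of `A`. -/
def IsGNP (A : Set (E d)) (I : Fin s → Set (E d)) : Prop :=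
  IsPolytope A ∧ (0 : E d) ∈ interior A ∧ IsVertPartition A I ∧
    (∑ i, pieceD A (I i)) = A

/-- The dual piece `∇_j`. -/
def pieceN (A : Set (E d)) (I : Fin s → Set (E d)) (j : Fin s) : Set (E d) :=
  {y | ∀ i : Fin s, ∀ m ∈ pieceD A (I i), -(if i = j then (1:ℝ) else 0) ≤ (inner ℝ m y : ℝ)}

def nab (A : Set (E d)) (I : Fin s → Set (E d)) : Set (E d) := ∑ j, pieceN A I j

/-- A facet: a nonempty proper face of codimension one. -/
def IsFacet (A F : Set (E d)) : Prop :=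
  IsExtreme ℝ A F ∧ F.Nonempty ∧ F ≠ A ∧
    Module.finrank ℝ ↥(vectorSpan ℝ F) + 1 = d

/-- Cone of nonnegative real combinations of elements of `S`. -/
def coneOf (S : Set (E d)) : Set (E d) :=
  {x | ∃ (t : Finset (E d)) (c : E d → ℝ), (t : Set (E d)) ⊆ S ∧ (∀ v, 0 ≤ c v) ∧
      x = ∑ v ∈ t, c v • v}

def IsLatticeSet (S : Set (E d)) : Prop := ∀ v ∈ S, ∀ k : Fin d, ∃ z : ℤ, v k = (z : ℝ)

/-- A full-dimensional simplex. -/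
def IsSimplex (S : Set (E d)) : Prop :=
  ∃ F : Finset (E d), S = convexHull ℝ (F : Set (E d)) ∧ F.card = d + 1 ∧
    AffineIndependent ℝ (fun v : F => (v : E d))

/-- Good pair of generalized nef partitions. -/
def IsGoodPair (A1 A2 : Set (E d)) (I1 I2 : Fin s → Set (E d)) : Prop :=
  IsGNP A1 I1 ∧ IsGNP A2 I2 ∧
  (∀ i, pieceD A1 (I1 i) ⊆ pieceD A2 (I2 i)) ∧
  (∀ i, IsLatticeSet (Vert (pieceD A1 (I1 i)))) ∧
  IsLatticeSet (Vert A1) ∧ IsLatticeSet (Vert (pol A2)) ∧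
  (0 : E d) ∈ interior A1 ∧ (0 : E d) ∈ interior (pol A2)


section Basics

variable {A B : Set (E d)}

lemma mem_pol_iff {y : E d} : y ∈ pol A ↔ ∀ x ∈ A, (-1:ℝ) ≤ inner ℝ x y := Iff.rfl

lemma pol_anti (h : A ⊆ B) : pol B ⊆ pol A := fun y hy x hx => hy x (h hx)

lemma convex_pol (A : Set (E d)) : Convex ℝ (pol A) := by
  have : pol A = ⋂ x ∈ A, {y : E d | (-1:ℝ) ≤ inner ℝ x y} := by
    ext y; simp [pol, Set.mem_iInter]
  rw [this]
  exact convex_iInter fun x => convex_iInter fun _ =>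
    convex_halfSpace_ge (IsLinearMap.mk (fun a b => inner_add_right x a b)
      (fun c a => real_inner_smul_right x a c)) (-1)

lemma isClosed_pol (A : Set (E d)) : IsClosed (pol A) := by
  have : pol A = ⋂ x ∈ A, {y : E d | (-1:ℝ) ≤ inner ℝ x y} := by
    ext y; simp [pol, Set.mem_iInter]
  rw [this]
  exact isClosed_biInter fun x _ =>
    isClosed_le continuous_const (continuous_const.inner continuous_id)

lemma zero_mem_pol (A : Set (E d)) : (0 : E d) ∈ pol A := by
  intro x _; rw [inner_zero_right]; norm_num

lemma pol_convexHull (S : Set (E d)) : pol (convexHull ℝ S) = pol S := by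
  refine Set.Subset.antisymm (pol_anti (subset_convexHull ℝ S)) ?_
  intro y hy x hx
  have hsub : convexHull ℝ S ⊆ {x : E d | (-1:ℝ) ≤ inner ℝ x y} :=
    convexHull_min (fun z hz => hy z hz)
      (convex_halfSpace_ge (IsLinearMap.mk (fun a b => inner_add_left a b y)
        (fun c a => real_inner_smul_left a y c)) (-1))
  exact hsub hx

lemma subset_pol_pol (A : Set (E d)) : A ⊆ pol (pol A) := by
  intro a ha w hw
  have := hw a ha
  rwa [real_inner_comm]

lemma pol_pol_eq (hA : Convex ℝ A) (hcl : IsClosed A) (h0 : (0:E d) ∈ A) :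
    pol (pol A) = A := by
  refine Set.Subset.antisymm ?_ (subset_pol_pol A)
  intro x hx
  by_contra hxA
  obtain ⟨f, c, hfA, hcx⟩ := geometric_hahn_banach_closed_point hA hcl hxA
  have hc0 : (0:ℝ) < c := by simpa using hfA 0 h0
  set w : E d := (InnerProductSpace.toDual ℝ (E d)).symm f with hw
  have hwf : ∀ z : E d, (inner ℝ w z : ℝ) = f z := fun z =>
    InnerProductSpace.toDual_symm_apply
  set y : E d := (-(1/c)) • w with hy
  have hypol : y ∈ pol A := by
    intro a ha
    have h1 : (inner ℝ a y : ℝ) = (-(1/c)) * f a := by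
      rw [real_inner_smul_right, real_inner_comm, hwf]
    rw [h1]
    have h3 := (hfA a ha).le
    have h4 : (1/c) * f a ≤ (1/c) * c := mul_le_mul_of_nonneg_left h3 (by positivity)
    rw [one_div_mul_cancel (ne_of_gt hc0)] at h4
    nlinarith
  have := hx y hypol
  have h2 : (inner ℝ y x : ℝ) = (-(1/c)) * f x := by
    rw [real_inner_smul_left, hwf]
  rw [h2] at this
  have h4 : (1/c) * c < (1/c) * f x := mul_lt_mul_of_pos_left hcx (by positivity)
  rw [one_div_mul_cancel (ne_of_gt hc0)] at h4
  nlinarith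

lemma pol_bounded (h : (0:E d) ∈ interior A) : Bornology.IsBounded (pol A) := by
  obtain ⟨ε, hε, hball⟩ := Metric.mem_nhds_iff.mp (mem_interior_iff_mem_nhds.mp h)
  rw [Metric.isBounded_iff_subset_closedBall 0]
  refine ⟨2/ε, fun y hy => ?_⟩
  simp only [Metric.mem_closedBall, dist_zero_right]
  by_cases h0 : y = 0
  · simp [h0]; positivity
  · have hny : 0 < ‖y‖ := norm_pos_iff.mpr h0
    set x : E d := (-((ε/2)/‖y‖)) • y with hx
    have hxA : x ∈ A := by
      apply hball
      simp only [Metric.mem_ball, dist_zero_right, hx, norm_smul, Real.norm_eq_abs,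
        abs_neg, abs_of_nonneg (show (0:ℝ) ≤ (ε/2)/‖y‖ by positivity)]
      rw [div_mul_cancel₀ _ (ne_of_gt hny)]
      linarith
    have hin := hy x hxA
    rw [hx, real_inner_smul_left, real_inner_self_eq_norm_sq] at hin
    have hkey : (ε/2/‖y‖) * ‖y‖^2 = (ε/2) * ‖y‖ := by
      field_simp
    have h2 : (ε/2) * ‖y‖ ≤ 1 := by nlinarith [hkey]
    have h3 : ε * ‖y‖ ≤ 2 := by nlinarith
    rw [le_div_iff₀ hε]; linarith

lemma zero_mem_interior_pol (h : Bornology.IsBounded A) :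
    (0:E d) ∈ interior (pol A) := by
  obtain ⟨R, hR⟩ := h.subset_closedBall 0
  have hR1 : A ⊆ Metric.closedBall 0 (max R 1) :=
    hR.trans (Metric.closedBall_subset_closedBall (le_max_left _ _))
  set M := max R 1 with hM
  have hM0 : (0:ℝ) < M := lt_of_lt_of_le one_pos (le_max_right _ _)
  rw [mem_interior_iff_mem_nhds, Metric.mem_nhds_iff]
  refine ⟨1/M, by positivity, fun y hy x hx => ?_⟩
  simp only [Metric.mem_ball, dist_zero_right] at hy
  have hxn : ‖x‖ ≤ M := by
    have := hR1 hx; simpa [Metric.mem_closedBall, dist_zero_right] using this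
  have h1 : |(inner ℝ x y : ℝ)| ≤ ‖x‖ * ‖y‖ := abs_real_inner_le_norm x y
  have h2 : ‖x‖ * ‖y‖ ≤ M * (1/M) := by
    apply mul_le_mul hxn hy.le (norm_nonneg _) (le_of_lt hM0)
  rw [mul_one_div_cancel (ne_of_gt hM0)] at h2
  have := abs_le.mp (h1.trans h2)
  linarith [this.1]

end Basics


section Polyhedra

lemma mem_extremePoints_of_subset {S T : Set (E d)} {x : E d}
    (hx : x ∈ Set.extremePoints ℝ T) (hxS : x ∈ S) (hST : S ⊆ T) :
    x ∈ Set.extremePoints ℝ S :=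
  ⟨hxS, fun _ h₁ _ h₂ hseg => hx.2 (hST h₁) (hST h₂) hseg⟩

variable (G : Finset (E d)) (b : E d → ℝ)

lemma isClosed_polyhedron : IsClosed {x : E d | ∀ a ∈ G, b a ≤ inner ℝ a x} := by
  have : {x : E d | ∀ a ∈ G, b a ≤ inner ℝ a x} = ⋂ a ∈ (G : Set (E d)), {x | b a ≤ inner ℝ a x} := by
    ext x; simp [Set.mem_iInter]
  rw [this]
  exact isClosed_biInter fun a _ =>
    isClosed_le continuous_const (continuous_const.inner continuous_id)

lemma convex_polyhedron : Convex ℝ {x : E d | ∀ a ∈ G, b a ≤ inner ℝ a x} := by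
  have : {x : E d | ∀ a ∈ G, b a ≤ inner ℝ a x} = ⋂ a ∈ (G : Set (E d)), {x | b a ≤ inner ℝ a x} := by
    ext x; simp [Set.mem_iInter]
  rw [this]
  exact convex_iInter fun a => convex_iInter fun _ =>
    convex_halfSpace_ge (IsLinearMap.mk (fun u v => inner_add_right a u v)
      (fun c u => real_inner_smul_right a u c)) (b a)

lemma extremePoints_polyhedron_finite :
    (Set.extremePoints ℝ {x : E d | ∀ a ∈ G, b a ≤ inner ℝ a x}).Finite := by
  classical
  set S := {x : E d | ∀ a ∈ G, b a ≤ inner ℝ a x} with hS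
  set Φ : E d → Finset (E d) := fun e => G.filter (fun a => (inner ℝ a e : ℝ) = b a) with hΦ
  have hinj : Set.InjOn Φ (Set.extremePoints ℝ S) := by
    intro e he e' he' hee
    by_contra hne
    set u : E d := e' - e with hu
    have hu0 : u ≠ 0 := sub_ne_zero.mpr (Ne.symm hne)
    have hact : ∀ a ∈ Φ e, (inner ℝ a u : ℝ) = 0 := by
      intro a ha
      have h1 : (inner ℝ a e : ℝ) = b a := (Finset.mem_filter.mp ha).2
      have h2 : (inner ℝ a e' : ℝ) = b a := by
        have : a ∈ Φ e' := hee ▸ ha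
        exact (Finset.mem_filter.mp this).2
      rw [hu, inner_sub_right, h1, h2, sub_self]
    have hslack : ∀ a ∈ G, a ∉ Φ e → b a < inner ℝ a e := by
      intro a haG haΦ
      rcases lt_or_eq_of_le (he.1 a haG) with h | h
      · exact h
      · exact absurd (Finset.mem_filter.mpr ⟨haG, h.symm⟩) haΦ
    set Δ : Finset (E d) := G.filter (fun a => a ∉ Φ e) with hΔ
    set δ : ℝ := if hne2 : Δ.Nonempty then Δ.inf' hne2 (fun a => inner ℝ a e - b a) else 1 with hδ
    have hδpos : 0 < δ := by
      rw [hδ]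
      split
      · next hne2 =>
        rw [Finset.lt_inf'_iff]
        intro a ha
        have := Finset.mem_filter.mp ha
        linarith [hslack a this.1 this.2]
      · norm_num
    have hδle : ∀ a ∈ G, a ∉ Φ e → δ ≤ inner ℝ a e - b a := by
      intro a haG haΦ
      have haΔ : a ∈ Δ := Finset.mem_filter.mpr ⟨haG, haΦ⟩
      rw [hδ]
      rw [dif_pos ⟨a, haΔ⟩]
      exact Finset.inf'_le _ haΔ
    set M : ℝ := (∑ a ∈ G, |(inner ℝ a u : ℝ)|) + 1 with hM
    have hMpos : 0 < M := by
      rw [hM]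
      have : (0:ℝ) ≤ ∑ a ∈ G, |(inner ℝ a u : ℝ)| :=
        Finset.sum_nonneg fun a _ => abs_nonneg _
      linarith
    have hMbound : ∀ a ∈ G, |(inner ℝ a u : ℝ)| ≤ M - 1 := by
      intro a haG
      rw [hM]
      simp only [add_sub_cancel_right]
      exact Finset.single_le_sum (fun a _ => abs_nonneg ((inner ℝ a u : ℝ))) haG
    set t : ℝ := δ / M with ht
    have htpos : 0 < t := by positivity
    have hbound : ∀ a ∈ G, a ∉ Φ e → t * |(inner ℝ a u : ℝ)| < δ := by
      intro a haG haΦ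
      have h1 : t * |(inner ℝ a u : ℝ)| ≤ t * (M - 1) :=
        mul_le_mul_of_nonneg_left (hMbound a haG) htpos.le
      have h2 : t * (M - 1) < t * M := by
        apply mul_lt_mul_of_pos_left _ htpos
        linarith
      have h3 : t * M = δ := by
        rw [ht, div_mul_cancel₀ _ (ne_of_gt hMpos)]
      linarith
    have hmem : ∀ σ : ℝ, |σ| = 1 → e + (σ * t) • u ∈ S := by
      intro σ hσ
      intro a haG
      rw [inner_add_right, real_inner_smul_right]
      by_cases haΦ : a ∈ Φ e
      · rw [hact a haΦ, mul_zero, add_zero]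
        exact he.1 a haG
      · have h1 : t * |(inner ℝ a u : ℝ)| < δ := hbound a haG haΦ
        have h2 : δ ≤ inner ℝ a e - b a := hδle a haG haΦ
        have h3 : |σ * t * (inner ℝ a u : ℝ)| = t * |(inner ℝ a u : ℝ)| := by
          rw [abs_mul, abs_mul, hσ, one_mul, abs_of_nonneg htpos.le]
        have h4 := neg_abs_le (σ * t * (inner ℝ a u : ℝ))
        rw [h3] at h4
        linarith
    have hm1 : e + t • u ∈ S := by
      have h := hmem 1 (by norm_num)
      rwa [one_mul] at h
    have hm2 : e - t • u ∈ S := by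
      have := hmem (-1) (by norm_num)
      have heq : e + ((-1) * t) • u = e - t • u := by
        rw [neg_one_mul, neg_smul]; abel
      rwa [heq] at this
    have hseg : e ∈ openSegment ℝ (e - t • u) (e + t • u) := by
      refine ⟨1/2, 1/2, by norm_num, by norm_num, by norm_num, ?_⟩
      module
    have := he.2 hm2 hm1 hseg
    have : t • u = 0 := by
      have h := congrArg (fun z => e - z) this
      simpa using h
    rcases smul_eq_zero.mp this with h | h
    · exact absurd h (ne_of_gt htpos)
    · exact hu0 h
  have himg : Φ '' (Set.extremePoints ℝ S) ⊆ (G.powerset : Finset (Finset (E d))) := by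
    rintro _ ⟨e, _, rfl⟩
    simp only [Finset.coe_powerset, Set.mem_preimage, Set.mem_powerset_iff]
    exact Finset.filter_subset _ _
  exact Set.Finite.of_finite_image
    (Set.Finite.subset (Finset.finite_toSet _) himg) hinj

lemma polyhedron_eq_convexHull_extremePoints
    (hbd : Bornology.IsBounded {x : E d | ∀ a ∈ G, b a ≤ inner ℝ a x}) :
    {x : E d | ∀ a ∈ G, b a ≤ inner ℝ a x}
      = convexHull ℝ (Set.extremePoints ℝ {x : E d | ∀ a ∈ G, b a ≤ inner ℝ a x}) := by
  set S := {x : E d | ∀ a ∈ G, b a ≤ inner ℝ a x} with hS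
  have hcomp : IsCompact S :=
    Metric.isCompact_iff_isClosed_bounded.mpr ⟨isClosed_polyhedron G b, hbd⟩
  have hKM := closure_convexHull_extremePoints hcomp (convex_polyhedron G b)
  have hfin : (Set.extremePoints ℝ S).Finite := extremePoints_polyhedron_finite G b
  have hclosed : IsClosed (convexHull ℝ (Set.extremePoints ℝ S)) :=
    (hfin.isCompact_convexHull ℝ).isClosed
  exact hKM.symm.trans hclosed.closure_eq

lemma polytope_eq_convexHull_extremePoints (F : Finset (E d)) :
    convexHull ℝ (F : Set (E d))
      = convexHull ℝ (Set.extremePoints ℝ (convexHull ℝ (F : Set (E d)))) := by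
  set S := convexHull ℝ (F : Set (E d)) with hS
  have hcomp : IsCompact S := F.finite_toSet.isCompact_convexHull ℝ
  have hKM := closure_convexHull_extremePoints hcomp (convex_convexHull ℝ _)
  have hfin : (Set.extremePoints ℝ S).Finite :=
    F.finite_toSet.subset (extremePoints_convexHull_subset)
  exact hKM.symm.trans (hfin.isCompact_convexHull ℝ).isClosed.closure_eq

end Polyhedra


section Sums

variable {ι : Type*} [DecidableEq ι]

lemma mem_finsetSum_sets (t : Finset ι) (S : ι → Set (E d)) (x : E d) :
    x ∈ (∑ i ∈ t, S i) ↔ ∃ f : ι → E d, (∀ i ∈ t, f i ∈ S i) ∧ x = ∑ i ∈ t, f i := by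
  classical
  induction t using Finset.induction generalizing x with
  | empty =>
    simp only [Finset.sum_empty]
    constructor
    · intro hx
      refine ⟨fun _ => 0, by simp, ?_⟩
      simpa using hx
    · rintro ⟨f, -, rfl⟩
      simp [Set.mem_zero]
  | insert a t' hnotmem ih =>
    rw [Finset.sum_insert hnotmem]
    constructor
    · intro hx
      obtain ⟨u, hu, v, hv, huv⟩ := Set.mem_add.mp hx
      obtain ⟨f, hf, rfl⟩ := (ih v).mp hv
      refine ⟨Function.update f a u, ?_, ?_⟩
      · intro i hi
        rcases Finset.mem_insert.mp hi with rfl | hi'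
        · rw [Function.update_self]; exact hu
        · rw [Function.update_of_ne (ne_of_mem_of_not_mem hi' hnotmem)]
          exact hf i hi'
      · rw [Finset.sum_insert hnotmem, Function.update_self, ← huv]
        congr 1
        apply Finset.sum_congr rfl
        intro i hi
        rw [Function.update_of_ne (ne_of_mem_of_not_mem hi hnotmem)]
    · rintro ⟨f, hf, rfl⟩
      rw [Finset.sum_insert hnotmem]
      exact Set.add_mem_add (hf a (Finset.mem_insert_self a t'))
        ((ih _).mpr ⟨f, fun i hi => hf i (Finset.mem_insert_of_mem hi), rfl⟩)

lemma finsetSum_sets_mono (t : Finset ι) {S T : ι → Set (E d)}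
    (h : ∀ i ∈ t, S i ⊆ T i) : (∑ i ∈ t, S i) ⊆ ∑ i ∈ t, T i := by
  classical
  induction t using Finset.induction with
  | empty => simp
  | insert a t' hnotmem ih =>
    rw [Finset.sum_insert hnotmem, Finset.sum_insert hnotmem]
    exact Set.add_subset_add (h a (Finset.mem_insert_self _ _))
      (ih fun i hi => h i (Finset.mem_insert_of_mem hi))

lemma convex_finsetSum (t : Finset ι) {S : ι → Set (E d)}
    (h : ∀ i ∈ t, Convex ℝ (S i)) : Convex ℝ (∑ i ∈ t, S i) := by
  classical
  induction t using Finset.induction with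
  | empty =>
    rw [Finset.sum_empty]
    exact convex_zero
  | insert a t' hnotmem ih =>
    rw [Finset.sum_insert hnotmem]
    exact (h a (Finset.mem_insert_self _ _)).add
      (ih fun i hi => h i (Finset.mem_insert_of_mem hi))

lemma isCompact_finsetSum (t : Finset ι) {S : ι → Set (E d)}
    (h : ∀ i ∈ t, IsCompact (S i)) : IsCompact (∑ i ∈ t, S i) := by
  classical
  induction t using Finset.induction with
  | empty =>
    rw [Finset.sum_empty]
    exact Set.finite_zero.isCompact
  | insert a t' hnotmem ih =>
    rw [Finset.sum_insert hnotmem]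
    exact (h a (Finset.mem_insert_self _ _)).add
      (ih fun i hi => h i (Finset.mem_insert_of_mem hi))

lemma finite_finsetSum (t : Finset ι) {S : ι → Set (E d)}
    (h : ∀ i ∈ t, (S i).Finite) : (∑ i ∈ t, S i).Finite := by
  classical
  induction t using Finset.induction with
  | empty =>
    rw [Finset.sum_empty]
    exact Set.finite_zero
  | insert a t' hnotmem ih =>
    rw [Finset.sum_insert hnotmem]
    exact (h a (Finset.mem_insert_self _ _)).add
      (ih fun i hi => h i (Finset.mem_insert_of_mem hi))

lemma convexHull_finsetSum (t : Finset ι) (S : ι → Set (E d)) :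
    convexHull ℝ (∑ i ∈ t, S i) = ∑ i ∈ t, convexHull ℝ (S i) := by
  classical
  induction t using Finset.induction with
  | empty => simp [convexHull_singleton]
  | insert a t' hnotmem ih =>
    rw [Finset.sum_insert hnotmem, Finset.sum_insert hnotmem, convexHull_add, ih]

lemma smul_finsetSum (c : ℝ) (t : Finset ι) (S : ι → Set (E d)) :
    c • (∑ i ∈ t, S i) = ∑ i ∈ t, c • (S i) := by
  classical
  induction t using Finset.induction with
  | empty => simp
  | insert a t' hnotmem ih =>
    rw [Finset.sum_insert hnotmem, Finset.sum_insert hnotmem, smul_add, ih]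

end Sums

section Radstrom

lemma radstrom_cancel {A B C : Set (E d)} (hB : Convex ℝ B) (hBc : IsClosed B)
    (hCne : C.Nonempty) (hCbd : Bornology.IsBounded C) (h : A + C ⊆ B + C) :
    A ⊆ B := by
  classical
  intro a ha
  obtain ⟨c₀, hc₀⟩ := hCne
  have step : ∀ c : E d, c ∈ C → ∃ p : E d × E d, p.1 ∈ B ∧ p.2 ∈ C ∧ a + c = p.1 + p.2 := by
    intro c hc
    have : a + c ∈ B + C := h (Set.add_mem_add ha hc)
    obtain ⟨b, hb, c', hc', he⟩ := Set.mem_add.mp this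
    exact ⟨(b, c'), hb, hc', he.symm⟩
  -- iterate
  let next : {c : E d // c ∈ C} → E d × {c : E d // c ∈ C} := fun c =>
    ⟨(step c.1 c.2).choose.1, (step c.1 c.2).choose.2, ((step c.1 c.2).choose_spec.2.1)⟩
  let cs : ℕ → {c : E d // c ∈ C} := fun n => (fun p => (next p).2)^[n] ⟨c₀, hc₀⟩
  let bs : ℕ → E d := fun n => (next (cs n)).1
  have hbsB : ∀ n, bs n ∈ B := fun n => (step _ (cs n).2).choose_spec.1
  have hstep : ∀ n, a + (cs n : E d) = bs n + (cs (n+1) : E d) := by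
    intro n
    have h1 : cs (n+1) = (next (cs n)).2 := Function.iterate_succ_apply' _ n _
    rw [h1]
    exact (step _ (cs n).2).choose_spec.2.2
  have key : ∀ n : ℕ, (n : ℝ) • a + (cs 0 : E d) = (∑ k ∈ Finset.range n, bs k) + (cs n : E d) := by
    intro n
    induction n with
    | zero => simp
    | succ n ih =>
      rw [Finset.sum_range_succ]
      push_cast
      rw [add_smul, one_smul]
      calc ((n:ℝ) • a + a) + (cs 0 : E d) = ((n:ℝ) • a + (cs 0 : E d)) + a := by abel
        _ = ((∑ k ∈ Finset.range n, bs k) + (cs n : E d)) + a := by rw [ih]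
        _ = (∑ k ∈ Finset.range n, bs k) + (a + (cs n : E d)) := by abel
        _ = (∑ k ∈ Finset.range n, bs k) + (bs n + (cs (n+1) : E d)) := by rw [hstep n]
        _ = ((∑ k ∈ Finset.range n, bs k) + bs n) + (cs (n+1) : E d) := by abel
  obtain ⟨M, hMbd⟩ := hCbd.subset_closedBall 0
  have hMnorm : ∀ c : E d, c ∈ C → ‖c‖ ≤ M := by
    intro c hc
    have := hMbd hc
    simpa [Metric.mem_closedBall, dist_zero_right] using this
  have hM0 : 0 ≤ M := le_trans (norm_nonneg c₀) (hMnorm c₀ hc₀)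
  rw [← hBc.closure_eq]
  rw [Metric.mem_closure_iff]
  intro ε hε
  obtain ⟨n, hn⟩ := exists_nat_gt (2 * M / ε)
  have hn0 : 0 < n := by
    by_contra hn0
    push_neg at hn0
    interval_cases n
    simp only [Nat.cast_zero] at hn
    have : 0 ≤ 2 * M / ε := by positivity
    linarith
  have hnR : (0:ℝ) < n := by exact_mod_cast hn0
  refine ⟨(n:ℝ)⁻¹ • (∑ k ∈ Finset.range n, bs k), ?_, ?_⟩
  · -- convex combination of elements of B
    have : (n:ℝ)⁻¹ • (∑ k ∈ Finset.range n, bs k)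
        = ∑ k ∈ Finset.range n, (n:ℝ)⁻¹ • bs k := by
      rw [Finset.smul_sum]
    rw [this]
    apply hB.sum_mem (fun i _ => by positivity)
    · rw [Finset.sum_const, Finset.card_range, nsmul_eq_mul]
      field_simp
    · exact fun i _ => hbsB i
  · -- distance estimate
    have hformula : a - (n:ℝ)⁻¹ • (∑ k ∈ Finset.range n, bs k)
        = (n:ℝ)⁻¹ • ((cs n : E d) - (cs 0 : E d)) := by
      have h1 := key n
      have h2 : (∑ k ∈ Finset.range n, bs k) = (n : ℝ) • a + (cs 0 : E d) - (cs n : E d) := by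
        rw [h1]; abel
      rw [h2]
      match_scalars <;> field_simp <;> ring
    rw [dist_eq_norm, hformula, norm_smul]
    have hnle : ‖(cs n : E d) - (cs 0 : E d)‖ ≤ 2 * M := by
      calc ‖(cs n : E d) - (cs 0 : E d)‖ ≤ ‖(cs n : E d)‖ + ‖(cs 0 : E d)‖ := norm_sub_le _ _
        _ ≤ M + M := add_le_add (hMnorm _ (cs n).2) (hMnorm _ (cs 0).2)
        _ = 2 * M := by ring
    have : ‖((n:ℝ)⁻¹)‖ * ‖(cs n : E d) - (cs 0 : E d)‖ ≤ (n:ℝ)⁻¹ * (2 * M) := by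
      rw [Real.norm_eq_abs, abs_of_pos (by positivity)]
      exact mul_le_mul_of_nonneg_left hnle (by positivity)
    apply lt_of_le_of_lt this
    rw [inv_mul_lt_iff₀ hnR]
    calc 2 * M = (2 * M / ε) * ε := by field_simp
      _ < n * ε := by
        apply mul_lt_mul_of_pos_right hn hε

end Radstrom



section Pieces

variable {A : Set (E d)} {I : Fin s → Set (E d)}

lemma ind_nonneg (S : Set (E d)) (v : E d) : 0 ≤ ind S v := by
  rw [ind]; exact Set.indicator_nonneg (fun _ _ => zero_le_one) v

lemma ind_of_mem {S : Set (E d)} {v : E d} (h : v ∈ S) : ind S v = 1 := by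
  rw [ind, Set.indicator_of_mem h]

lemma ind_of_not_mem {S : Set (E d)} {v : E d} (h : v ∉ S) : ind S v = 0 := by
  rw [ind, Set.indicator_of_notMem h]

lemma zero_mem_pieceD (A S : Set (E d)) : (0 : E d) ∈ pieceD A S := by
  intro v _
  rw [inner_zero_left]
  exact neg_nonpos.mpr (ind_nonneg S v)

lemma convex_pieceD (A S : Set (E d)) : Convex ℝ (pieceD A S) := by
  have : pieceD A S = ⋂ v ∈ Vert (pol A), {m : E d | -(ind S v) ≤ inner ℝ m v} := by
    ext m; simp [pieceD, Set.mem_iInter]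
  rw [this]
  exact convex_iInter fun v => convex_iInter fun _ =>
    convex_halfSpace_ge (IsLinearMap.mk (fun u w => inner_add_left u w v)
      (fun c u => real_inner_smul_left u v c)) (-(ind S v))

lemma isClosed_pieceD (A S : Set (E d)) : IsClosed (pieceD A S) := by
  have : pieceD A S = ⋂ v ∈ Vert (pol A), {m : E d | -(ind S v) ≤ inner ℝ m v} := by
    ext m; simp [pieceD, Set.mem_iInter]
  rw [this]
  exact isClosed_biInter fun v _ =>
    isClosed_le continuous_const (continuous_id.inner continuous_const)

lemma convex_pieceN (A : Set (E d)) (I : Fin s → Set (E d)) (j : Fin s) :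
    Convex ℝ (pieceN A I j) := by
  have : pieceN A I j = ⋂ i, ⋂ m ∈ pieceD A (I i),
      {y : E d | -(if i = j then (1:ℝ) else 0) ≤ inner ℝ m y} := by
    ext y; simp [pieceN, Set.mem_iInter]
  rw [this]
  exact convex_iInter fun i => convex_iInter fun m => convex_iInter fun _ =>
    convex_halfSpace_ge (IsLinearMap.mk (fun u w => inner_add_right m u w)
      (fun c u => real_inner_smul_right m u c)) _

lemma isClosed_pieceN (A : Set (E d)) (I : Fin s → Set (E d)) (j : Fin s) :
    IsClosed (pieceN A I j) := by
  have : pieceN A I j = ⋂ i, ⋂ m ∈ pieceD A (I i),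
      {y : E d | -(if i = j then (1:ℝ) else 0) ≤ inner ℝ m y} := by
    ext y; simp [pieceN, Set.mem_iInter]
  rw [this]
  exact isClosed_iInter fun i => isClosed_biInter fun m _ =>
    isClosed_le continuous_const (continuous_const.inner continuous_id)

lemma zero_mem_pieceN (A : Set (E d)) (I : Fin s → Set (E d)) (j : Fin s) :
    (0 : E d) ∈ pieceN A I j := by
  intro i m _
  rw [inner_zero_right]
  split <;> norm_num

lemma polA_repr {F : Finset (E d)} (hF : A = convexHull ℝ (F : Set (E d))) :
    pol A = {y : E d | ∀ a ∈ F, (-1:ℝ) ≤ inner ℝ a y} := by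
  rw [hF, pol_convexHull]
  ext y; simp [pol]

lemma vert_polA_finite {F : Finset (E d)} (hF : A = convexHull ℝ (F : Set (E d))) :
    (Vert (pol A)).Finite := by
  rw [Vert, polA_repr hF]
  exact extremePoints_polyhedron_finite F (fun _ => (-1:ℝ))

lemma polA_hull {F : Finset (E d)} (hF : A = convexHull ℝ (F : Set (E d)))
    (h0 : (0:E d) ∈ interior A) : pol A = convexHull ℝ (Vert (pol A)) := by
  have hbd : Bornology.IsBounded {y : E d | ∀ a ∈ F, (-1:ℝ) ≤ inner ℝ a y} := by
    rw [← polA_repr hF]; exact pol_bounded h0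
  have h1 := polyhedron_eq_convexHull_extremePoints F (fun _ => (-1:ℝ)) hbd
  rw [← polA_repr hF] at h1
  rw [Vert]
  exact h1

lemma pieceD_repr (hfin : (Vert (pol A)).Finite) (S : Set (E d)) :
    pieceD A S = {m : E d | ∀ a ∈ hfin.toFinset, -(ind S a) ≤ inner ℝ a m} := by
  ext m
  simp only [pieceD, Set.mem_setOf_eq, Set.Finite.mem_toFinset]
  constructor <;> intro h v hv
  · rw [real_inner_comm]; exact h v hv
  · rw [real_inner_comm]; exact h v hv

lemma pieceD_subset_A (hsum : (∑ i, pieceD A (I i)) = A) (i : Fin s) :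
    pieceD A (I i) ⊆ A := by
  intro x hx
  rw [← hsum]
  rw [mem_finsetSum_sets]
  classical
  refine ⟨fun i' => if i' = i then x else 0, ?_, ?_⟩
  · intro i' _
    by_cases h : i' = i
    · simp only [h, if_pos rfl]; exact h ▸ hx
    · simp only [if_neg h]; exact zero_mem_pieceD A _
  · rw [Finset.sum_ite_eq' Finset.univ i (fun _ => x)]
    simp

lemma isBounded_A {F : Finset (E d)} (hF : A = convexHull ℝ (F : Set (E d))) :
    Bornology.IsBounded A := by
  rw [hF]
  exact (F.finite_toSet.isCompact_convexHull ℝ).isBounded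

lemma pieceD_isCompact {F : Finset (E d)} (hF : A = convexHull ℝ (F : Set (E d)))
    (hsum : (∑ i, pieceD A (I i)) = A) (i : Fin s) : IsCompact (pieceD A (I i)) :=
  Metric.isCompact_iff_isClosed_bounded.mpr ⟨isClosed_pieceD A (I i),
    ((isBounded_A hF).subset (pieceD_subset_A hsum i))⟩

lemma pieceD_hull {F : Finset (E d)} (hF : A = convexHull ℝ (F : Set (E d)))
    (hsum : (∑ i, pieceD A (I i)) = A) (i : Fin s) :
    pieceD A (I i) = convexHull ℝ (Vert (pieceD A (I i)))
      ∧ (Vert (pieceD A (I i))).Finite := by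
  have hfin := vert_polA_finite hF
  have hrepr := pieceD_repr hfin (I i)
  have hbd : Bornology.IsBounded {m : E d | ∀ a ∈ hfin.toFinset, -(ind (I i) a) ≤ inner ℝ a m} := by
    rw [← hrepr]
    exact (isBounded_A hF).subset (pieceD_subset_A hsum i)
  have h1 := polyhedron_eq_convexHull_extremePoints hfin.toFinset (fun a => -(ind (I i) a)) hbd
  have h2 := extremePoints_polyhedron_finite hfin.toFinset (fun a => -(ind (I i) a))
  rw [← hrepr] at h1 h2
  exact ⟨by rw [Vert]; exact h1, by rw [Vert]; exact h2⟩

end Pieces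

section Star

variable {A : Set (E d)} {I : Fin s → Set (E d)}

/-- The deformation `D(t)`. -/
def Dt (I : Fin s → Set (E d)) (t : Fin s → ℝ) : Set (E d) :=
  {x : E d | ∀ i, ∀ v ∈ I i, -(t i) ≤ (inner ℝ v x : ℝ)}

lemma Dt_add_subset {t t' : Fin s → ℝ} : Dt I t + Dt I t' ⊆ Dt I (t + t') := by
  rintro x hx
  obtain ⟨u, hu, v, hv, rfl⟩ := Set.mem_add.mp hx
  intro i w hw
  rw [inner_add_right]
  have h1 := hu i w hw
  have h2 := hv i w hw
  have : -(t + t') i = -(t i) + -(t' i) := by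
    simp only [Pi.add_apply]; ring
  rw [this]
  exact add_le_add h1 h2

lemma Dt_smul {t : Fin s → ℝ} {c : ℝ} (hc : 0 < c) : c • Dt I t = Dt I (c • t) := by
  ext x
  constructor
  · rintro ⟨u, hu, rfl⟩
    intro i v hv
    rw [real_inner_smul_right]
    have h1 := hu i v hv
    have h2 := mul_le_mul_of_nonneg_left h1 hc.le
    have : -((c • t) i) = c * (-(t i)) := by
      simp only [Pi.smul_apply, smul_eq_mul]; ring
    rw [this]
    exact h2
  · intro hx
    refine ⟨c⁻¹ • x, ?_, ?_⟩
    · intro i v hv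
      rw [real_inner_smul_right]
      have h1 := hx i v hv
      have h2 := mul_le_mul_of_nonneg_left h1 (inv_nonneg.mpr hc.le)
      have h3 : c⁻¹ * (-((c • t) i)) = -(t i) := by
        simp only [Pi.smul_apply, smul_eq_mul]
        field_simp
      rw [h3] at h2
      exact h2
    · show c • c⁻¹ • x = x
      rw [smul_smul, mul_inv_cancel₀ (ne_of_gt hc), one_smul]

lemma ind_eq_ite (hpart : IsVertPartition A I) {v : E d} {i₀ : Fin s} (hv : v ∈ I i₀)
    (i : Fin s) : ind (I i) v = if i = i₀ then 1 else 0 := by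
  split
  · next h => rw [h]; exact ind_of_mem hv
  · next h =>
    apply ind_of_not_mem
    intro hvi
    have hvV : v ∈ Vert (pol A) := hpart.1 i₀ hv
    obtain ⟨j, _, hjuniq⟩ := hpart.2 v hvV
    exact h ((hjuniq i hvi).trans (hjuniq i₀ hv).symm)

lemma star_easy (hpart : IsVertPartition A I) {t : Fin s → ℝ} (ht : ∀ i, 0 ≤ t i) :
    (∑ i, t i • pieceD A (I i)) ⊆ Dt I t := by
  intro x hx
  obtain ⟨f, hf, rfl⟩ := (mem_finsetSum_sets _ _ _).mp hx
  intro i₀ v hv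
  have hvV : v ∈ Vert (pol A) := hpart.1 i₀ hv
  have hterm : ∀ i : Fin s, -(t i * ind (I i) v) ≤ (inner ℝ v (f i) : ℝ) := by
    intro i
    obtain ⟨m, hm, hfi⟩ := Set.mem_smul_set.mp (hf i (Finset.mem_univ i))
    rw [← hfi, real_inner_smul_right]
    have h1 : -(ind (I i) v) ≤ (inner ℝ v m : ℝ) := by
      rw [real_inner_comm]; exact hm v hvV
    have := mul_le_mul_of_nonneg_left h1 (ht i)
    calc -(t i * ind (I i) v) = t i * (-(ind (I i) v)) := by ring
      _ ≤ t i * inner ℝ v m := this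
  have hsum0 : ∑ i : Fin s, -(t i * ind (I i) v) = -(t i₀) := by
    have h1 : ∀ i : Fin s, -(t i * ind (I i) v) = if i = i₀ then -(t i) else 0 := by
      intro i
      rw [ind_eq_ite hpart hv i]
      split <;> ring
    rw [Finset.sum_congr rfl (fun i _ => h1 i),
      Finset.sum_ite_eq' Finset.univ i₀ (fun i => -(t i))]
    simp
  calc -(t i₀) = ∑ i : Fin s, -(t i * ind (I i) v) := hsum0.symm
      _ ≤ ∑ i : Fin s, (inner ℝ v (f i) : ℝ) := Finset.sum_le_sum (fun i _ => hterm i)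
      _ = inner ℝ v (∑ i : Fin s, f i) := (inner_sum _ _ _).symm

lemma Dt_one_eq {F : Finset (E d)} (hF : A = convexHull ℝ (F : Set (E d)))
    (h0 : (0:E d) ∈ interior A) (hpart : IsVertPartition A I) :
    Dt I (fun _ => (1:ℝ)) = A := by
  have hAconv : Convex ℝ A := hF ▸ convex_convexHull ℝ _
  have hAclosed : IsClosed A := hF ▸ (F.finite_toSet.isCompact_convexHull ℝ).isClosed
  have h0A : (0:E d) ∈ A := interior_subset h0
  have hpol := polA_hull hF h0
  have h1 : Dt I (fun _ => (1:ℝ)) = pol (Vert (pol A)) := by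
    ext x
    constructor
    · intro hx v hv
      obtain ⟨i, hi, _⟩ := hpart.2 v hv
      exact hx i v hi
    · intro hx i v hv
      exact hx v (hpart.1 i hv)
  rw [h1, ← pol_convexHull, ← hpol, pol_pol_eq hAconv hAclosed h0A]

lemma star {F : Finset (E d)} (hF : A = convexHull ℝ (F : Set (E d)))
    (h0 : (0:E d) ∈ interior A) (hpart : IsVertPartition A I)
    (hsum : (∑ i, pieceD A (I i)) = A) (t : Fin s → ℝ) (ht : ∀ i, 0 ≤ t i) :
    Dt I t = ∑ i, t i • pieceD A (I i) := by
  -- first the bounded case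
  have hbdd : ∀ t : Fin s → ℝ, (∀ i, 0 ≤ t i) → (∀ i, t i ≤ 1) →
      Dt I t = ∑ i, t i • pieceD A (I i) := by
    intro t ht ht1
    refine Set.Subset.antisymm ?_ (star_easy hpart ht)
    have hsplit : (∑ i, pieceD A (I i))
        = (∑ i, t i • pieceD A (I i)) + ∑ i, (1 - t i) • pieceD A (I i) := by
      rw [← Finset.sum_add_distrib]
      apply Finset.sum_congr rfl
      intro i _
      have h := (convex_pieceD A (I i)).add_smul (ht i) (sub_nonneg.mpr (ht1 i))
      rw [add_sub_cancel, one_smul] at h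
      exact h
    have hincl : Dt I t + (∑ i, (1 - t i) • pieceD A (I i)) ⊆ Dt I (fun _ => (1:ℝ)) := by
      intro x hx
      obtain ⟨u, hu, v, hv, rfl⟩ := Set.mem_add.mp hx
      have h1 : v ∈ Dt I (fun i => 1 - t i) :=
        star_easy hpart (fun i => sub_nonneg.mpr (ht1 i)) hv
      have h2 := Dt_add_subset (I := I) (t := t) (t' := fun i => 1 - t i)
        (Set.add_mem_add hu h1)
      have h3 : t + (fun i => 1 - t i) = (fun _ => (1:ℝ)) := by
        funext i; simp
      rwa [h3] at h2
    have hD : ∀ i : Fin s, IsCompact (pieceD A (I i)) := pieceD_isCompact hF hsum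
    have hBconv : Convex ℝ (∑ i, t i • pieceD A (I i)) :=
      convex_finsetSum _ (fun i _ => (convex_pieceD A (I i)).smul _)
    have hBclosed : IsClosed (∑ i, t i • pieceD A (I i)) :=
      (isCompact_finsetSum _ (fun i _ => (hD i).smul (t i))).isClosed
    have hCcompact : IsCompact (∑ i, (1 - t i) • pieceD A (I i)) :=
      isCompact_finsetSum _ (fun i _ => (hD i).smul (1 - t i))
    have hCne : (∑ i, (1 - t i) • pieceD A (I i)).Nonempty := by
      refine ⟨0, ?_⟩
      rw [mem_finsetSum_sets]
      refine ⟨fun _ => 0, fun i _ => ?_, by simp⟩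
      rw [← smul_zero (1 - t i)]
      exact Set.smul_mem_smul_set (zero_mem_pieceD A _)
    have hchain : Dt I t + (∑ i, (1 - t i) • pieceD A (I i))
        ⊆ (∑ i, t i • pieceD A (I i)) + ∑ i, (1 - t i) • pieceD A (I i) := by
      intro x hx
      have := hincl hx
      rw [Dt_one_eq hF h0 hpart, ← hsum, hsplit] at this
      exact this
    exact radstrom_cancel hBconv hBclosed hCne hCcompact.isBounded hchain
  by_cases hle : ∀ i, t i ≤ 1
  · exact hbdd t ht hle
  · push_neg at hle
    obtain ⟨i₀, hi₀⟩ := hle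
    have hne : (Finset.univ : Finset (Fin s)).Nonempty := ⟨i₀, Finset.mem_univ i₀⟩
    set lam : ℝ := Finset.univ.sup' hne t with hlam
    have hlam1 : 1 < lam := lt_of_lt_of_le hi₀ (Finset.le_sup' t (Finset.mem_univ i₀))
    have hlampos : 0 < lam := lt_trans one_pos hlam1
    have htle : ∀ i, t i ≤ lam := fun i => Finset.le_sup' t (Finset.mem_univ i)
    set t' : Fin s → ℝ := lam⁻¹ • t with ht'
    have ht'0 : ∀ i, 0 ≤ t' i := fun i => by
      simp only [ht', Pi.smul_apply, smul_eq_mul]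
      exact mul_nonneg (inv_nonneg.mpr hlampos.le) (ht i)
    have ht'1 : ∀ i, t' i ≤ 1 := fun i => by
      simp only [ht', Pi.smul_apply, smul_eq_mul]
      rw [inv_mul_le_iff₀ hlampos, mul_one]
      exact htle i
    have h1 : Dt I t = lam • Dt I t' := by
      rw [Dt_smul hlampos]
      congr 1
      rw [ht', smul_smul, mul_inv_cancel₀ (ne_of_gt hlampos), one_smul]
    rw [h1, hbdd t' ht'0 ht'1, smul_finsetSum]
    apply Finset.sum_congr rfl
    intro i _
    rw [smul_smul]
    congr 1
    simp only [ht', Pi.smul_apply, smul_eq_mul]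
    field_simp

end Star

section R1

variable {A : Set (E d)} {I : Fin s → Set (E d)}

lemma pieceN_eq_convexHull {F : Finset (E d)} (hF : A = convexHull ℝ (F : Set (E d)))
    (h0 : (0:E d) ∈ interior A) (hpart : IsVertPartition A I)
    (hsum : (∑ i, pieceD A (I i)) = A) (j : Fin s) :
    pieceN A I j = convexHull ℝ ({0} ∪ I j) := by
  have hfin := vert_polA_finite hF
  refine Set.Subset.antisymm ?_ ?_
  · -- hard direction
    intro y hy
    have hPfin : ({0} ∪ I j : Set (E d)).Finite :=
      (Set.finite_singleton 0).union (hfin.subset (hpart.1 j))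
    have hPconv : Convex ℝ (convexHull ℝ ({0} ∪ I j)) := convex_convexHull ℝ _
    have hPclosed : IsClosed (convexHull ℝ ({0} ∪ I j)) :=
      (hPfin.isCompact_convexHull ℝ).isClosed
    have h0P : (0:E d) ∈ convexHull ℝ ({0} ∪ I j) :=
      subset_convexHull ℝ _ (Or.inl rfl)
    rw [← pol_pol_eq hPconv hPclosed h0P]
    intro w hw
    -- bound for other constraints
    set Mw : ℝ := ∑ v ∈ hfin.toFinset, |(inner ℝ v w : ℝ)| with hMw
    have hMw0 : 0 ≤ Mw := Finset.sum_nonneg (fun v _ => abs_nonneg _)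
    set t : Fin s → ℝ := fun i => if i = j then 1 else Mw with htdef
    have ht0 : ∀ i, 0 ≤ t i := by
      intro i; rw [htdef]; dsimp only
      split
      · norm_num
      · exact hMw0
    have hwDt : w ∈ Dt I t := by
      intro i v hv
      rw [htdef]; dsimp only
      by_cases h : i = j
      · rw [if_pos h]
        have hvP : v ∈ convexHull ℝ ({0} ∪ I j) :=
          subset_convexHull ℝ _ (Or.inr (h ▸ hv))
        have h2 := hw v hvP
        linarith
      · rw [if_neg h]
        have hvV : v ∈ hfin.toFinset := hfin.mem_toFinset.mpr (hpart.1 i hv)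
        have h1 : |(inner ℝ v w : ℝ)| ≤ Mw :=
          Finset.single_le_sum (fun v _ => abs_nonneg ((inner ℝ v w : ℝ))) hvV
        have h2 := neg_abs_le ((inner ℝ v w : ℝ))
        linarith
    rw [star hF h0 hpart hsum t ht0] at hwDt
    obtain ⟨g, hg, hgw⟩ := (mem_finsetSum_sets _ _ _).mp hwDt
    have hterm : ∀ i : Fin s, (if i = j then (-1:ℝ) else 0) ≤ (inner ℝ (g i) y : ℝ) := by
      intro i
      obtain ⟨m, hm, hgi⟩ := Set.mem_smul_set.mp (hg i (Finset.mem_univ i))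
      rw [← hgi, real_inner_smul_left]
      have h1 : -(if i = j then (1:ℝ) else 0) ≤ (inner ℝ m y : ℝ) := hy i m hm
      rw [htdef]; dsimp only
      by_cases h : i = j
      · simp only [if_pos h]
        simp only [if_pos h] at h1
        linarith
      · simp only [if_neg h]
        simp only [if_neg h] at h1
        have h2 : (0:ℝ) ≤ inner ℝ m y := by linarith
        exact mul_nonneg hMw0 h2
    have hle : (-1:ℝ) ≤ ∑ i : Fin s, (inner ℝ (g i) y : ℝ) := by
      have h1 : ∑ i : Fin s, (if i = j then (-1:ℝ) else 0) = -1 := by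
        rw [Finset.sum_ite_eq' Finset.univ j (fun _ => (-1:ℝ))]
        simp
      calc (-1:ℝ) = ∑ i : Fin s, (if i = j then (-1:ℝ) else 0) := h1.symm
        _ ≤ _ := Finset.sum_le_sum (fun i _ => hterm i)
    rw [hgw, sum_inner]
    exact hle
  · -- easy direction
    apply convexHull_min _ (convex_pieceN A I j)
    intro x hx
    rcases hx with hx | hx
    · rw [Set.mem_singleton_iff] at hx
      rw [hx]
      exact zero_mem_pieceN A I j
    · intro i m hm
      have h1 : -(ind (I i) x) ≤ (inner ℝ m x : ℝ) := hm x (hpart.1 j hx)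
      rwa [ind_eq_ite hpart hx i] at h1

end R1

section Coord

lemma coord_sum {ι : Type*} (t : Finset ι) (f : ι → E d) (k : Fin d) :
    (∑ j ∈ t, f j) k = ∑ j ∈ t, f j k := by
  classical
  induction t using Finset.induction with
  | empty =>
    rw [Finset.sum_empty, Finset.sum_empty]
    rfl
  | insert a t' hnotmem ih =>
    rw [Finset.sum_insert hnotmem, Finset.sum_insert hnotmem, ← ih]
    rfl

end Coord

section Dual

variable {A : Set (E d)} {I : Fin s → Set (E d)}

lemma dual_GNP (hs : 0 < s) (hgnp : IsGNP A I) :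
    ∃ J : Fin s → Set (E d),
      IsGNP (nab A I) J ∧
      (∀ j, pieceD (nab A I) (J j) = pieceN A I j) ∧
      (∀ j, pieceN A I j = convexHull ℝ ({0} ∪ I j)) ∧
      (IsLatticeSet (Vert (pol A)) → IsLatticeSet (Vert (nab A I))) ∧
      ((∀ i, IsLatticeSet (Vert (pieceD A (I i)))) → IsLatticeSet (Vert (pol (nab A I)))) ∧
      ((0:E d) ∈ interior (pol A) → (0:E d) ∈ interior (nab A I)) ∧
      (0:E d) ∈ interior (pol (nab A I)) := by
  classical
  obtain ⟨⟨F, hF⟩, h0, hpart, hsum⟩ := hgnp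
  have hVfin : (Vert (pol A)).Finite := vert_polA_finite hF
  have hIfin : ∀ j, (I j).Finite := fun j => hVfin.subset (hpart.1 j)
  have hNall : ∀ j, pieceN A I j = convexHull ℝ ({0} ∪ I j) :=
    fun j => pieceN_eq_convexHull hF h0 hpart hsum j
  have hBsum : nab A I = ∑ j, pieceN A I j := rfl
  -- B is a polytope
  have hKfin : (∑ j, ({0} ∪ I j) : Set (E d)).Finite :=
    finite_finsetSum _ (fun j _ => (Set.finite_singleton 0).union (hIfin j))
  have hBK : nab A I = convexHull ℝ (∑ j, ({0} ∪ I j) : Set (E d)) := by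
    rw [hBsum, convexHull_finsetSum]
    exact Finset.sum_congr rfl (fun j _ => hNall j)
  have hBconv : Convex ℝ (nab A I) := hBK ▸ convex_convexHull ℝ _
  have hBcompact : IsCompact (nab A I) := hBK ▸ hKfin.isCompact_convexHull ℝ
  have hBclosed : IsClosed (nab A I) := hBcompact.isClosed
  have h0B : (0:E d) ∈ nab A I := by
    rw [hBsum, mem_finsetSum_sets]
    exact ⟨fun _ => 0, fun j _ => zero_mem_pieceN A I j, by simp⟩
  have hIsPolytopeB : IsPolytope (nab A I) :=
    ⟨hKfin.toFinset, by rw [hBK, hKfin.coe_toFinset]⟩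
  -- pol A ⊆ B
  have hpolAB : pol A ⊆ nab A I := by
    rw [polA_hull hF h0]
    apply convexHull_min _ hBconv
    intro v hv
    obtain ⟨i₀, hi₀, _⟩ := hpart.2 v hv
    rw [hBsum, mem_finsetSum_sets]
    refine ⟨fun j => if j = i₀ then v else 0, fun j _ => ?_, ?_⟩
    · by_cases h : j = i₀
      · simp only [if_pos h]
        rw [hNall j]
        exact subset_convexHull ℝ _ (Or.inr (h ▸ hi₀))
      · simp only [if_neg h]
        exact zero_mem_pieceN A I j
    · rw [Finset.sum_ite_eq' Finset.univ i₀ (fun _ => v)]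
      simp
  -- the polytope C
  set C : Set (E d) := convexHull ℝ (⋃ i, pieceD A (I i)) with hC
  have hDhull : ∀ i : Fin s, pieceD A (I i) = convexHull ℝ (Vert (pieceD A (I i)))
      ∧ (Vert (pieceD A (I i))).Finite := pieceD_hull hF hsum
  have hCrepr : C = convexHull ℝ (⋃ i, Vert (pieceD A (I i))) := by
    apply Set.Subset.antisymm
    · apply convexHull_min _ (convex_convexHull ℝ _)
      intro x hx
      obtain ⟨i, hxD⟩ := Set.mem_iUnion.mp hx
      rw [(hDhull i).1] at hxD
      exact convexHull_mono (Set.subset_iUnion (fun i => Vert (pieceD A (I i))) i) hxD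
    · exact convexHull_mono (Set.iUnion_mono (fun i => extremePoints_subset))
  have hUfin : (⋃ i, Vert (pieceD A (I i))).Finite :=
    Set.finite_iUnion (fun i => (hDhull i).2)
  have hCconv : Convex ℝ C := convex_convexHull ℝ _
  have hCcompact : IsCompact C := hCrepr ▸ hUfin.isCompact_convexHull ℝ
  have hCclosed : IsClosed C := hCcompact.isClosed
  have hDC : ∀ i, pieceD A (I i) ⊆ C :=
    fun i => (Set.subset_iUnion (fun i => pieceD A (I i)) i).trans (subset_convexHull ℝ _)
  have h0C : (0:E d) ∈ C := hDC ⟨0, hs⟩ (zero_mem_pieceD A _)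
  -- pol C = B
  have hpolC : pol C = nab A I := by
    apply Set.Subset.antisymm
    · intro y hy
      rw [← pol_pol_eq hBconv hBclosed h0B]
      intro u hu
      set W : Finset (E d) := hVfin.toFinset with hW
      set T : Fin s → Finset ℝ := fun j =>
        insert 0 ((W.filter (fun v => v ∈ I j)).image (fun v => -(inner ℝ v u : ℝ))) with hT
      have hTne : ∀ j, (T j).Nonempty := fun j => ⟨0, Finset.mem_insert_self _ _⟩
      set t : Fin s → ℝ := fun j => (T j).max' (hTne j) with ht
      have ht0 : ∀ j, 0 ≤ t j := fun j => Finset.le_max' _ 0 (Finset.mem_insert_self _ _)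
      have htbound : ∀ j, ∀ v ∈ I j, -(t j) ≤ (inner ℝ v u : ℝ) := by
        intro j v hv
        have hvW : v ∈ W := hVfin.mem_toFinset.mpr (hpart.1 j hv)
        have hmem : -(inner ℝ v u : ℝ) ∈ T j :=
          Finset.mem_insert_of_mem
            (Finset.mem_image_of_mem _ (Finset.mem_filter.mpr ⟨hvW, hv⟩))
        have := Finset.le_max' _ _ hmem
        linarith
      have hattain : ∀ j, ∃ k : E d, k ∈ pieceN A I j ∧ (inner ℝ k u : ℝ) = -(t j) := by
        intro j
        have hmem : t j ∈ T j := Finset.max'_mem (T j) (hTne j)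
        rcases Finset.mem_insert.mp hmem with h0' | himg
        · refine ⟨0, zero_mem_pieceN A I j, ?_⟩
          rw [inner_zero_left, h0']
          simp
        · obtain ⟨v, hvfil, hveq⟩ := Finset.mem_image.mp himg
          obtain ⟨hvW, hvI⟩ := Finset.mem_filter.mp hvfil
          refine ⟨v, ?_, by linarith [hveq]⟩
          rw [hNall j]
          exact subset_convexHull ℝ _ (Or.inr hvI)
      choose k hkN hku using hattain
      have hsumt : ∑ j, t j ≤ 1 := by
        have hkB : (∑ j, k j) ∈ nab A I := by
          rw [hBsum, mem_finsetSum_sets]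
          exact ⟨k, fun j _ => hkN j, rfl⟩
        have h1 := hu _ hkB
        rw [sum_inner] at h1
        rw [Finset.sum_congr rfl (fun j (_ : j ∈ Finset.univ) => hku j)] at h1
        rw [Finset.sum_neg_distrib] at h1
        linarith
      have huDt : u ∈ Dt I t := fun i v hv => htbound i v hv
      rw [star hF h0 hpart hsum t ht0] at huDt
      obtain ⟨g, hg, hgu⟩ := (mem_finsetSum_sets _ _ _).mp huDt
      have hterm : ∀ i : Fin s, -(t i) ≤ (inner ℝ (g i) y : ℝ) := by
        intro i
        obtain ⟨m, hm, hgi⟩ := Set.mem_smul_set.mp (hg i (Finset.mem_univ i))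
        rw [← hgi, real_inner_smul_left]
        have h1 : (-1:ℝ) ≤ inner ℝ m y := hy m (hDC i hm)
        nlinarith [ht0 i]
      have h2 : -(∑ j, t j) ≤ (inner ℝ u y : ℝ) := by
        rw [hgu, sum_inner, ← Finset.sum_neg_distrib]
        exact Finset.sum_le_sum (fun i _ => hterm i)
      linarith
    · intro y hy x hx
      have hhs : C ⊆ {x : E d | (-1:ℝ) ≤ inner ℝ x y} := by
        apply convexHull_min _ (convex_halfSpace_ge
          (IsLinearMap.mk (fun a b => inner_add_left a b y)
            (fun c a => real_inner_smul_left a y c)) (-1))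
        intro x' hx'
        obtain ⟨i, hxD⟩ := Set.mem_iUnion.mp hx'
        rw [hBsum] at hy
        obtain ⟨f, hf, rfl⟩ := (mem_finsetSum_sets _ _ _).mp hy
        show (-1:ℝ) ≤ inner ℝ x' (∑ j, f j)
        rw [inner_sum]
        have hterm : ∀ j : Fin s, -(if i = j then (1:ℝ) else 0) ≤ (inner ℝ x' (f j) : ℝ) :=
          fun j => hf j (Finset.mem_univ j) i x' hxD
        have h1 : ∑ j : Fin s, -(if i = j then (1:ℝ) else 0) = -1 := by
          have : ∀ j : Fin s, -(if i = j then (1:ℝ) else 0)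
              = if j = i then (-1:ℝ) else 0 := by
            intro j
            by_cases h : j = i
            · simp [h]
            · rw [if_neg (show ¬ i = j from fun hh => h hh.symm), if_neg h, neg_zero]
          rw [Finset.sum_congr rfl (fun j _ => this j),
            Finset.sum_ite_eq' Finset.univ i (fun _ => (-1:ℝ))]
          simp
        calc (-1:ℝ) = ∑ j : Fin s, -(if i = j then (1:ℝ) else 0) := h1.symm
          _ ≤ _ := Finset.sum_le_sum (fun j _ => hterm j)
      exact hhs hx
  have hpolB : pol (nab A I) = C := by
    rw [← hpolC, pol_pol_eq hCconv hCclosed h0C]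
  -- Vert structure of pol B
  have hVertC_sub : Vert C ⊆ ⋃ i, pieceD A (I i) := by
    rw [hC, Vert]
    exact extremePoints_convexHull_subset
  have hChull : C = convexHull ℝ (Vert C) := by
    have h1 : C = convexHull ℝ ((hUfin.toFinset : Finset (E d)) : Set (E d)) := by
      rw [hCrepr, hUfin.coe_toFinset]
    have h2 := polytope_eq_convexHull_extremePoints hUfin.toFinset
    rw [← h1] at h2
    rw [Vert]
    exact h2
  -- the dual partition
  set phi : E d → Fin s := fun w => if h : ∃ i, w ∈ pieceD A (I i) then h.choose else ⟨0, hs⟩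
    with hphi
  set J : Fin s → Set (E d) := fun i => {w ∈ Vert (pol (nab A I)) | phi w = i} with hJ
  have hphiD : ∀ w ∈ Vert (pol (nab A I)), w ∈ pieceD A (I (phi w)) := by
    intro w hw
    have hwC : w ∈ Vert C := by rwa [hpolB] at hw
    have hwD : ∃ i, w ∈ pieceD A (I i) := Set.mem_iUnion.mp (hVertC_sub hwC)
    rw [hphi]
    dsimp only
    rw [dif_pos hwD]
    exact hwD.choose_spec
  have hJsub : ∀ i, J i ⊆ Vert (pol (nab A I)) := fun i w hw => hw.1
  have hJpart : IsVertPartition (nab A I) J :=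
    ⟨hJsub, fun w hw => ⟨phi w, ⟨hw, rfl⟩, fun i hi => hi.2.symm⟩⟩
  -- N j ⊆ pieceD B (J j)
  have hNsub : ∀ j, pieceN A I j ⊆ pieceD (nab A I) (J j) := by
    intro j y hy w hw
    by_cases hwJ : w ∈ J j
    · rw [ind_of_mem hwJ]
      have h1 : w ∈ pieceD A (I j) := by
        have h2 := hphiD w hw
        rwa [hwJ.2] at h2
      have h3 := hy j w h1
      rw [if_pos rfl] at h3
      rw [real_inner_comm]
      linarith
    · rw [ind_of_not_mem hwJ]
      have hphiw : phi w ≠ j := fun h => hwJ ⟨hw, h⟩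
      have h1 : w ∈ pieceD A (I (phi w)) := hphiD w hw
      have h3 := hy (phi w) w h1
      rw [if_neg hphiw] at h3
      rw [real_inner_comm]
      linarith
  -- sum of dual pieces is inside B
  have hsumD'B : (∑ j, pieceD (nab A I) (J j)) ⊆ nab A I := by
    intro y hy
    obtain ⟨f, hf, rfl⟩ := (mem_finsetSum_sets _ _ _).mp hy
    rw [← hpolC]
    intro x hx
    have hhs : C ⊆ {x : E d | (-1:ℝ) ≤ inner ℝ x (∑ j, f j)} := by
      rw [hChull]
      apply convexHull_min _ (convex_halfSpace_ge
        (IsLinearMap.mk (fun a b => inner_add_left a b _)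
          (fun c a => real_inner_smul_left a _ c)) (-1))
      intro w hw
      have hwV' : w ∈ Vert (pol (nab A I)) := by rwa [hpolB]
      show (-1:ℝ) ≤ inner ℝ w (∑ j, f j)
      rw [inner_sum]
      have hind : ∀ j, ind (J j) w = if j = phi w then 1 else 0 := by
        intro j
        by_cases h : j = phi w
        · rw [if_pos h, h]
          exact ind_of_mem ⟨hwV', rfl⟩
        · rw [if_neg h]
          exact ind_of_not_mem (fun hwj => h (hwj.2.symm))
      have h1 : ∑ j : Fin s, -(ind (J j) w) = -1 := by
        have : ∀ j : Fin s, -(ind (J j) w) = if j = phi w then (-1:ℝ) else 0 := by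
          intro j
          rw [hind j]
          by_cases h : j = phi w <;> simp [h]
        rw [Finset.sum_congr rfl (fun j _ => this j),
          Finset.sum_ite_eq' Finset.univ (phi w) (fun _ => (-1:ℝ))]
        simp
      calc (-1:ℝ) = ∑ j : Fin s, -(ind (J j) w) := h1.symm
        _ ≤ ∑ j : Fin s, (inner ℝ w (f j) : ℝ) := by
            apply Finset.sum_le_sum
            intro j _
            rw [real_inner_comm]
            exact hf j (Finset.mem_univ j) w hwV'
    exact hhs hx
  -- pieceD B (J j) = N j
  have hE2 : ∀ j, pieceD (nab A I) (J j) = pieceN A I j := by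
    intro j
    refine Set.Subset.antisymm ?_ (hNsub j)
    have hNcompact : ∀ j', IsCompact (pieceN A I j') := by
      intro j'
      rw [hNall j']
      exact ((Set.finite_singleton 0).union (hIfin j')).isCompact_convexHull ℝ
    have hC0compact : IsCompact (∑ j' ∈ Finset.univ.erase j, pieceN A I j') :=
      isCompact_finsetSum _ (fun j' _ => hNcompact j')
    have hC0ne : (∑ j' ∈ Finset.univ.erase j, pieceN A I j').Nonempty := by
      refine ⟨0, ?_⟩
      rw [mem_finsetSum_sets]
      exact ⟨fun _ => 0, fun j' _ => zero_mem_pieceN A I j', by simp⟩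
    have hchain : pieceD (nab A I) (J j) + (∑ j' ∈ Finset.univ.erase j, pieceN A I j')
        ⊆ pieceN A I j + (∑ j' ∈ Finset.univ.erase j, pieceN A I j') := by
      intro x hx
      obtain ⟨u, hu, v, hv, rfl⟩ := Set.mem_add.mp hx
      have h1 : u + v ∈ ∑ j', pieceD (nab A I) (J j') := by
        rw [← Finset.add_sum_erase _ _ (Finset.mem_univ j)]
        exact Set.add_mem_add hu
          (finsetSum_sets_mono _ (fun j' _ => hNsub j') hv)
      have h2 : u + v ∈ nab A I := hsumD'B h1
      rw [hBsum, ← Finset.add_sum_erase _ (fun j' => pieceN A I j') (Finset.mem_univ j)] at h2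
      exact h2
    exact radstrom_cancel (convex_pieceN A I j) (isClosed_pieceN A I j)
      hC0ne hC0compact.isBounded hchain
  -- assemble
  have h0Bint : (0:E d) ∈ interior (nab A I) :=
    interior_mono hpolAB (zero_mem_interior_pol (isBounded_A hF))
  refine ⟨J, ⟨hIsPolytopeB, h0Bint, hJpart, ?_⟩, hE2, hNall, ?_, ?_, ?_, ?_⟩
  · rw [Finset.sum_congr rfl (fun j (_ : j ∈ Finset.univ) => hE2 j)]
    exact hBsum.symm
  · -- lattice of Vert (nab A I)
    intro hlatV v hv kk
    have hvK : v ∈ (∑ j, ({0} ∪ I j) : Set (E d)) := by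
      have h1 : v ∈ Set.extremePoints ℝ (convexHull ℝ (∑ j, ({0} ∪ I j) : Set (E d))) := by
        rw [Vert, hBK] at hv
        exact hv
      exact extremePoints_convexHull_subset h1
    obtain ⟨f, hf, rfl⟩ := (mem_finsetSum_sets _ _ _).mp hvK
    have hz : ∀ j : Fin s, ∃ z : ℤ, f j kk = (z : ℝ) := by
      intro j
      rcases hf j (Finset.mem_univ j) with h | h
      · rw [Set.mem_singleton_iff] at h
        exact ⟨0, by rw [h]; simp⟩
      · exact hlatV (f j) (hpart.1 j h) kk
    choose z hzz using hz
    refine ⟨∑ j, z j, ?_⟩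
    rw [coord_sum]
    rw [Finset.sum_congr rfl (fun j (_ : j ∈ Finset.univ) => hzz j)]
    push_cast
    ring
  · -- lattice of Vert (pol (nab A I))
    intro hlatD w hw kk
    rw [Vert, hpolB] at hw
    have hwD : ∃ i, w ∈ pieceD A (I i) := Set.mem_iUnion.mp (hVertC_sub hw)
    obtain ⟨i, hwDi⟩ := hwD
    have hwVert : w ∈ Vert (pieceD A (I i)) := by
      rw [Vert]
      exact mem_extremePoints_of_subset hw hwDi (hDC i)
    exact hlatD i w hwVert kk
  · exact fun h0pol => interior_mono hpolAB h0pol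
  · exact zero_mem_interior_pol hBcompact.isBounded

end Dual

/-- duality preserves good pairs of generalized nef partitions:
`(Π(∇²), Π(∇¹))` is a good pair, the partitions being the dual ones. -/
theorem goodPair_dual (A1 A2 : Set (E d)) (I1 I2 : Fin s → Set (E d))
    (hGP : IsGoodPair A1 A2 I1 I2) :
    ∃ J1 J2 : Fin s → Set (E d),
      IsGoodPair (nab A2 I2) (nab A1 I1) J2 J1 ∧
      (∀ j : Fin s, pieceD (nab A2 I2) (J2 j) = pieceN A2 I2 j) ∧
      (∀ j : Fin s, pieceD (nab A1 I1) (J1 j) = pieceN A1 I1 j) := by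
  obtain ⟨hGNP1, hGNP2, hDsub, hlatD1, hlatA1, hlatpolA2, h0A1, h0polA2⟩ := hGP
  rcases Nat.eq_zero_or_pos s with hs0 | hs
  · -- degenerate case: impossible
    exfalso
    subst hs0
    obtain ⟨⟨F, hF⟩, h0, hpart, hsum⟩ := hGNP1
    have hA1 : A1 = (0 : Set (E d)) := by
      rw [← hsum, Finset.univ_eq_empty, Finset.sum_empty]
    have hsub : ∀ z : E d, z = 0 := by
      intro z
      rw [hA1] at h0
      obtain ⟨ε, hε, hball⟩ := Metric.mem_nhds_iff.mp (mem_interior_iff_mem_nhds.mp h0)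
      by_contra hz
      have hnz : 0 < ‖z‖ := norm_pos_iff.mpr hz
      have hz' : (ε / (2 * ‖z‖)) • z ∈ Metric.ball (0:E d) ε := by
        simp only [Metric.mem_ball, dist_zero_right, norm_smul, Real.norm_eq_abs,
          abs_of_nonneg (show (0:ℝ) ≤ ε / (2 * ‖z‖) by positivity)]
        rw [div_mul_eq_mul_div, mul_comm]
        rw [show ‖z‖ * ε / (2 * ‖z‖) = ε / 2 by
          field_simp]
        linarith
      have hmem := hball hz'
      rw [Set.mem_zero] at hmem
      rcases smul_eq_zero.mp hmem with h | h
      · have : ε / (2 * ‖z‖) ≠ 0 := by positivity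
        exact this h
      · exact hz h
    have h0V : (0:E d) ∈ Vert (pol A1) := by
      constructor
      · exact zero_mem_pol A1
      · intro x₁ h₁ x₂ h₂ _
        exact hsub x₁
    obtain ⟨i, _, _⟩ := hpart.2 0 h0V
    exact i.elim0
  · obtain ⟨J1, hgnpB1, hE21, hNall1, hlatB1, hlatpolB1, h0B1fun, h0polB1⟩ :=
      dual_GNP hs hGNP1
    obtain ⟨J2, hgnpB2, hE22, hNall2, hlatB2, hlatpolB2, h0B2fun, h0polB2⟩ :=
      dual_GNP hs hGNP2
    refine ⟨J1, J2, ⟨hgnpB2, hgnpB1, ?_, ?_, ?_, ?_, ?_, ?_⟩, hE22, hE21⟩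
    · -- inclusion of pieces
      intro i
      rw [hE22 i, hE21 i]
      intro y hy i' m hm
      exact hy i' m (hDsub i' hm)
    · -- lattice property of the small pieces
      intro i v hv kk
      rw [hE22 i, hNall2 i] at hv
      have hv' : v ∈ Set.extremePoints ℝ (convexHull ℝ ({0} ∪ I2 i)) := hv
      have hvK : v ∈ ({0} ∪ I2 i : Set (E d)) := extremePoints_convexHull_subset hv'
      rcases hvK with h | h
      · rw [Set.mem_singleton_iff] at h
        exact ⟨0, by rw [h]; simp⟩
      · exact hlatpolA2 v (hGNP2.2.2.1.1 i h) kk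
    · exact hlatB2 hlatpolA2
    · exact hlatpolB1 hlatD1
    · exact h0B2fun h0polA2
    · exact h0polB1

end GNPPaper
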